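/- For n ≥ 1, every complex number z₀ satisfying 3n²z₀^{2n} + n(n+5)z₀^n + 2 = 0 is a fixed point of C_n, and the extraneous fixed points of C_n are exactly the solutions of z^n = (-(n+5) + √(n²+10n+1))/(6n) or z^n = (-(n+5) - √(n²+10n+1))/(6n); in particular there are exactly 2n extraneous fixed points. -/

import Mathlib

/-- The rational map given by the Chebyshev's method applied to `z·e^{z^n}`. -/
noncomputable def Cn (n : ℕ) (z : ℂ) : ℂ :=
  (n:ℂ) * z^(n+1) * (2*(n:ℂ)^2*z^(2*n) + 3*(n:ℂ)*z^n - (n:ℂ) + 1) /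
    (2 * ((n:ℂ)*z^n + 1)^3)

/-!
With `w = z ^ n` one has `C_n(z) = z · R(w)` for a rational function `R`, so a nonzero `z` is
fixed exactly when `R(w) = 1`. Clearing the denominator `2 (n w + 1)³` turns this into the
quadratic `3n²w² + n(n+5)w + 2 = 0`; the pole `n w = -1` is never a root. The quadratic has
discriminant `n²(n² + 10n + 1) > 0` and constant term `2`, so its two roots are distinct and
nonzero, and each of them has exactly `n` complex `n`-th roots.
-/

theorem IsPrimitiveRoot.ncard_setOf_pow_eq {R : Type*} [CommRing R] [IsDomain R] {ζ : R} {n : ℕ}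
    (hζ : IsPrimitiveRoot ζ n) (hn : n ≠ 0) {r α : R} (hα : α ^ n = r) (hr : r ≠ 0) :
    {z : R | z ^ n = r}.ncard = n := by
  classical
  have hset : {z : R | z ^ n = r} = (Polynomial.nthRootsFinset n r : Set R) := by
    ext z
    simp [Polynomial.mem_nthRootsFinset (Nat.pos_of_ne_zero hn)]
  rw [hset, Set.ncard_coe_finset, Polynomial.nthRootsFinset_def,
    Multiset.toFinset_card_of_nodup (hζ.nthRoots_nodup hr), hζ.card_nthRoots, if_pos ⟨α, hα⟩]

theorem Complex.ncard_setOf_pow_eq {n : ℕ} (hn : n ≠ 0) {r : ℂ} (hr : r ≠ 0) :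
    {z : ℂ | z ^ n = r}.ncard = n :=
  (Complex.isPrimitiveRoot_exp n hn).ncard_setOf_pow_eq hn
    (IsAlgClosed.exists_pow_nat_eq r (Nat.pos_of_ne_zero hn)).choose_spec hr

theorem Complex.ncard_setOf_pow_eq_or_pow_eq {n : ℕ} (hn : n ≠ 0) {r₁ r₂ : ℂ} (h₁ : r₁ ≠ 0)
    (h₂ : r₂ ≠ 0) (h : r₁ ≠ r₂) : {z : ℂ | z ^ n = r₁ ∨ z ^ n = r₂}.ncard = 2 * n := by
  have hfin : ∀ {r : ℂ}, r ≠ 0 → {z : ℂ | z ^ n = r}.Finite := fun hr ↦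
    Set.finite_of_ncard_ne_zero (by rwa [Complex.ncard_setOf_pow_eq hn hr])
  have hdisj : Disjoint {z : ℂ | z ^ n = r₁} {z : ℂ | z ^ n = r₂} :=
    Set.disjoint_left.2 fun _ hz₁ hz₂ ↦ h (hz₁.symm.trans hz₂)
  rw [Set.ofPred_or, Set.ncard_union_eq hdisj (hfin h₁) (hfin h₂),
    Complex.ncard_setOf_pow_eq hn h₁, Complex.ncard_setOf_pow_eq hn h₂, two_mul]

theorem chebyshev_ratio_eq_one_iff {K : Type*} [Field K] [NeZero (2 : K)] (a w : K) :
    a * w * (2 * a ^ 2 * w ^ 2 + 3 * a * w - a + 1) / (2 * (a * w + 1) ^ 3) = 1 ↔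
      3 * a ^ 2 * w ^ 2 + a * (a + 5) * w + 2 = 0 := by
  by_cases hpole : a * w + 1 = 0
  · have ha : a ≠ 0 := by rintro rfl; simp at hpole
    have hQ : 3 * a ^ 2 * w ^ 2 + a * (a + 5) * w + 2 = -a := by
      linear_combination (3 * a * w - 3 + a + 5) * hpole
    simp [hpole, hQ, ha]
  · rw [div_eq_one_iff_eq (by simp [hpole, NeZero.ne]), ← sub_eq_zero, ← neg_eq_zero]
    ring_nf

theorem Cn_eq_self_iff {n : ℕ} {z : ℂ} (hz : z ≠ 0) :
    Cn n z = z ↔ 3 * (n : ℂ) ^ 2 * z ^ (2 * n) + n * (n + 5) * z ^ n + 2 = 0 := by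
  have hCn : Cn n z = z * ((n : ℂ) * z ^ n * (2 * (n : ℂ) ^ 2 * (z ^ n) ^ 2 + 3 * n * z ^ n - n + 1)
      / (2 * (n * z ^ n + 1) ^ 3)) := by
    rw [Cn, pow_mul']; ring
  rw [hCn, mul_eq_left₀ hz, chebyshev_ratio_eq_one_iff, pow_mul']

theorem extraneous_quadratic_eq_zero_iff {n : ℕ} (hn : n ≠ 0) (w : ℂ) :
    3 * (n : ℂ) ^ 2 * w ^ 2 + n * (n + 5) * w + 2 = 0 ↔
      w = (-((n : ℂ) + 5) + (Real.sqrt ((n : ℝ) ^ 2 + 10 * n + 1) : ℂ)) / (6 * n) ∨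
      w = (-((n : ℂ) + 5) - (Real.sqrt ((n : ℝ) ^ 2 + 10 * n + 1) : ℂ)) / (6 * n) := by
  set s : ℂ := (Real.sqrt ((n : ℝ) ^ 2 + 10 * n + 1) : ℂ)
  have hN : (n : ℂ) ≠ 0 := Nat.cast_ne_zero.2 hn
  have hs : s ^ 2 = (n : ℂ) ^ 2 + 10 * n + 1 := by
    rw [← Complex.ofReal_pow, Real.sq_sqrt (by positivity)]
    push_cast; ring
  have hdiscrim : discrim (3 * (n : ℂ) ^ 2) ((n : ℂ) * (n + 5)) 2 = (n * s) * (n * s) := by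
    rw [discrim]; linear_combination (-(n : ℂ) ^ 2) * hs
  have hplus : (-((n : ℂ) * (n + 5)) + n * s) / (2 * (3 * (n : ℂ) ^ 2)) =
      (-((n : ℂ) + 5) + s) / (6 * n) := by
    field_simp; ring
  have hminus : (-((n : ℂ) * (n + 5)) - n * s) / (2 * (3 * (n : ℂ) ^ 2)) =
      (-((n : ℂ) + 5) - s) / (6 * n) := by
    field_simp; ring
  rw [sq w, quadratic_eq_zero_iff (by simpa using hN) hdiscrim, hplus, hminus]

/-- Every solution of `3n²z^{2n} + n(n+5)z^n + 2 = 0` is a fixed point of `C_n`;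
the extraneous (nonzero finite) fixed points of `C_n` are exactly the solutions of
`z^n = (-(n+5) ± √(n²+10n+1))/(6n)`, and there are exactly `2n` of them. -/
theorem Cn_extraneous_fixed_points (n : ℕ) (hn : 1 ≤ n) :
    (∀ z₀ : ℂ, 3*(n:ℂ)^2*z₀^(2*n) + (n:ℂ)*((n:ℂ)+5)*z₀^n + 2 = 0 → Cn n z₀ = z₀) ∧
    (∀ z : ℂ, z ≠ 0 →
      (Cn n z = z ↔
        z^n = (-(((n:ℂ))+5) + (Real.sqrt ((n:ℝ)^2 + 10*n + 1) : ℂ)) / (6*(n:ℂ)) ∨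
        z^n = (-(((n:ℂ))+5) - (Real.sqrt ((n:ℝ)^2 + 10*n + 1) : ℂ)) / (6*(n:ℂ)))) ∧
    {z : ℂ | z ≠ 0 ∧ Cn n z = z}.ncard = 2*n := by
  have hn₀ : n ≠ 0 := Nat.one_le_iff_ne_zero.1 hn
  set r₁ := (-(((n:ℂ))+5) + (Real.sqrt ((n:ℝ)^2 + 10*n + 1) : ℂ)) / (6*(n:ℂ))
  set r₂ := (-(((n:ℂ))+5) - (Real.sqrt ((n:ℝ)^2 + 10*n + 1) : ℂ)) / (6*(n:ℂ))
  have hfix : ∀ z : ℂ, z ≠ 0 → (Cn n z = z ↔ z ^ n = r₁ ∨ z ^ n = r₂) := fun z hz ↦ by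
    rw [Cn_eq_self_iff hz, pow_mul', extraneous_quadratic_eq_zero_iff hn₀]
  have hzero : ¬(0 = r₁ ∨ 0 = r₂) := by
    rw [← extraneous_quadratic_eq_zero_iff hn₀]; norm_num
  have hr₁ : r₁ ≠ 0 := fun h ↦ hzero (.inl h.symm)
  have hr₂ : r₂ ≠ 0 := fun h ↦ hzero (.inr h.symm)
  have hne : r₁ ≠ r₂ := by
    have hD : (0 : ℝ) < Real.sqrt ((n : ℝ) ^ 2 + 10 * n + 1) := Real.sqrt_pos.2 (by positivity)
    intro h
    rw [div_left_inj' (by simpa using hn₀)] at h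
    exact hD.ne' (Complex.ofReal_eq_zero.1 (by linear_combination h / 2))
  refine ⟨fun z₀ h ↦ ?_, hfix, ?_⟩
  · have hz₀ : z₀ ≠ 0 := by rintro rfl; simp [hn₀] at h
    exact (Cn_eq_self_iff hz₀).2 h
  · have hset : {z : ℂ | z ≠ 0 ∧ Cn n z = z} = {z : ℂ | z ^ n = r₁ ∨ z ^ n = r₂} := by
      ext z
      refine ⟨fun ⟨hz, h⟩ ↦ (hfix z hz).1 h, fun h ↦ ?_⟩
      have hz : z ≠ 0 := by rintro rfl; simp [hn₀, hr₁.symm, hr₂.symm] at h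
      exact ⟨hz, (hfix z hz).2 h⟩
    rw [hset, Complex.ncard_setOf_pow_eq_or_pow_eq hn₀ hr₁ hr₂ hne]
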